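/- For t ∈ ℝ and a measure μ on ℝ write θ_tμ := μ(· + t). Let (θ_tξ)* and (θ_tη)* denote the measures constructed from the pair (θ_tξ, θ_tη) in exactly the same way that ξ* and η* are constructed from (ξ, η). Then for every t ∈ ℝ: (θ_tξ)* = θ_{ζ(t)}ξ* and (θ_tη)* = θ_{ζ(t)}η*. -/
import Mathlib


open MeasureTheory

/-- The purely atomic part `μ^d` of a measure on `ℝ`. -/
noncomputable def atomicPart (μ : Measure ℝ) : Measure ℝ :=
  μ.restrict {t : ℝ | μ {t} ≠ 0}

/-- The diffuse part `μ^c` of a measure on `ℝ`. -/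
noncomputable def diffusePart (μ : Measure ℝ) : Measure ℝ :=
  μ.restrict {t : ℝ | μ {t} = 0}

/-- The time change `ζ`. -/
noncomputable def zeta (ξ η : Measure ℝ) (s : ℝ) : ℝ :=
  if 0 ≤ s then
    s + (atomicPart ξ (Set.Ico 0 s)).toReal + (atomicPart η (Set.Ico 0 s)).toReal
  else
    s - (atomicPart ξ (Set.Ico s 0)).toReal - (atomicPart η (Set.Ico s 0)).toReal

/-- The stretched measure `μ*` built from `μ` using the time change `ζ` of `(ξ, η)`. -/
noncomputable def starM (ξ η μ : Measure ℝ) : Measure ℝ :=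
  (diffusePart μ).map (zeta ξ η) +
    (atomicPart μ).bind fun t =>
      (μ {t})⁻¹ • volume.restrict (Set.Icc (zeta ξ η t) (zeta ξ η t + (μ {t}).toReal))

/-- The shift `θ_s μ := μ(· + s)` of a measure on `ℝ`. -/
noncomputable def shiftM (s : ℝ) (μ : Measure ℝ) : Measure ℝ :=
  μ.map fun x => x - s

section Aux

open Set

lemma e_coe (t : ℝ) : ⇑(MeasurableEquiv.subRight t) = fun x : ℝ => x - t := rfl

lemma map_singleton (t : ℝ) (μ : Measure ℝ) (x : ℝ) :
    (μ.map fun y : ℝ => y - t) {x} = μ {x + t} := by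
  rw [Measure.map_apply (by fun_prop) (measurableSet_singleton x)]
  congr 1
  ext y
  simp [sub_eq_iff_eq_add]

lemma shiftM_singleton (t : ℝ) (μ : Measure ℝ) (x : ℝ) :
    shiftM t μ {x} = μ {x + t} := map_singleton t μ x

lemma atoms_countable (μ : Measure ℝ) [SFinite μ] :
    Set.Countable {x : ℝ | μ {x} ≠ 0} := by
  have := MeasureTheory.Measure.countable_meas_pos_of_disjoint_iUnion₀ (μ := μ)
    (As := fun x : ℝ => {x}) (fun x => (measurableSet_singleton x).nullMeasurableSet)
    (fun x y hxy => (Set.disjoint_singleton.2 hxy).aedisjoint)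
  convert this using 1
  ext x
  simp [pos_iff_ne_zero]

lemma atoms_measurable (μ : Measure ℝ) [SFinite μ] :
    MeasurableSet {x : ℝ | μ {x} ≠ 0} :=
  (atoms_countable μ).measurableSet

lemma atomicPart_shift (t : ℝ) (μ : Measure ℝ) [IsLocallyFiniteMeasure μ] :
    atomicPart (shiftM t μ) = shiftM t (atomicPart μ) := by
  have hs : MeasurableSet {x : ℝ | (μ.map fun y : ℝ => y - t) {x} ≠ 0} := by
    have hset : {x : ℝ | (μ.map fun y : ℝ => y - t) {x} ≠ 0}
        = (fun x : ℝ => x + t) ⁻¹' {y : ℝ | μ {y} ≠ 0} := by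
      ext x; simp [map_singleton]
    rw [hset]
    exact (atoms_measurable μ).preimage (by fun_prop)
  show (μ.map fun y : ℝ => y - t).restrict {x : ℝ | (μ.map fun y : ℝ => y - t) {x} ≠ 0}
      = (atomicPart μ).map fun y : ℝ => y - t
  rw [Measure.restrict_map (by fun_prop) hs, atomicPart]
  congr 2
  ext y
  simp [map_singleton, sub_add_cancel]

lemma diffusePart_shift (t : ℝ) (μ : Measure ℝ) [IsLocallyFiniteMeasure μ] :
    diffusePart (shiftM t μ) = shiftM t (diffusePart μ) := by
  have hs : MeasurableSet {x : ℝ | (μ.map fun y : ℝ => y - t) {x} = 0} := by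
    have hset : {x : ℝ | (μ.map fun y : ℝ => y - t) {x} = 0}
        = (fun x : ℝ => x + t) ⁻¹' {y : ℝ | μ {y} ≠ 0}ᶜ := by
      ext x; simp [map_singleton]
    rw [hset]
    exact ((atoms_measurable μ).compl).preimage (by fun_prop)
  show (μ.map fun y : ℝ => y - t).restrict {x : ℝ | (μ.map fun y : ℝ => y - t) {x} = 0}
      = (diffusePart μ).map fun y : ℝ => y - t
  rw [Measure.restrict_map (by fun_prop) hs, diffusePart]
  congr 2
  ext y
  simp [map_singleton, sub_add_cancel]

/-- auxiliary signed "cumulative atomic mass" function -/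
noncomputable def Ff (μ : Measure ℝ) (s : ℝ) : ℝ :=
  if 0 ≤ s then (atomicPart μ (Set.Ico 0 s)).toReal
  else -(atomicPart μ (Set.Ico s 0)).toReal

lemma atomicPart_Ico_ne_top (μ : Measure ℝ) [IsLocallyFiniteMeasure μ] (a b : ℝ) :
    atomicPart μ (Set.Ico a b) ≠ ⊤ :=
  (((Measure.restrict_apply_le _ _).trans (measure_mono Set.Ico_subset_Icc_self)).trans_lt
    (isCompact_Icc.measure_lt_top)).ne

lemma Ff_diff (μ : Measure ℝ) [IsLocallyFiniteMeasure μ] {a b : ℝ} (h : a ≤ b) :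
    Ff μ b - Ff μ a = (atomicPart μ (Set.Ico a b)).toReal := by
  have hadd : ∀ x y z : ℝ, x ≤ y → y ≤ z →
      (atomicPart μ (Set.Ico x z)).toReal
        = (atomicPart μ (Set.Ico x y)).toReal + (atomicPart μ (Set.Ico y z)).toReal := by
    intro x y z hxy hyz
    rw [← Set.Ico_union_Ico_eq_Ico hxy hyz,
      measure_union Set.Ico_disjoint_Ico_same measurableSet_Ico,
      ENNReal.toReal_add (atomicPart_Ico_ne_top μ _ _) (atomicPart_Ico_ne_top μ _ _)]
  rcases le_or_gt 0 a with ha | ha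
  · rw [Ff, Ff, if_pos ha, if_pos (ha.trans h), hadd 0 a b ha h]
    ring
  · rcases le_or_gt 0 b with hb | hb
    · rw [Ff, Ff, if_pos hb, if_neg (not_le.2 ha), hadd a 0 b ha.le hb]
      ring
    · rw [Ff, Ff, if_neg (not_le.2 hb), if_neg (not_le.2 ha), hadd a b 0 h hb.le]
      ring

lemma zeta_eq (ξ η : Measure ℝ) (s : ℝ) : zeta ξ η s = s + Ff ξ s + Ff η s := by
  rw [zeta, Ff, Ff]
  split_ifs <;> ring

lemma Ff_shift (t : ℝ) (μ : Measure ℝ) [IsLocallyFiniteMeasure μ] (x : ℝ) :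
    Ff (shiftM t μ) x = Ff μ (x + t) - Ff μ t := by
  have hI : ∀ a b : ℝ, atomicPart (shiftM t μ) (Set.Ico a b)
      = atomicPart μ (Set.Ico (a + t) (b + t)) := by
    intro a b
    rw [atomicPart_shift, shiftM,
      Measure.map_apply (by fun_prop) measurableSet_Ico, Set.preimage_sub_const_Ico]
  rcases le_or_gt 0 x with hx | hx
  · rw [Ff, if_pos hx, hI, zero_add, ← Ff_diff μ (by linarith)]
  · rw [Ff, if_neg (not_le.2 hx), hI, zero_add, ← Ff_diff μ (by linarith : x + t ≤ t)]
    ring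

lemma zeta_shift (ξ η : Measure ℝ) [IsLocallyFiniteMeasure ξ] [IsLocallyFiniteMeasure η]
    (t : ℝ) :
    zeta (shiftM t ξ) (shiftM t η) = fun x => zeta ξ η (x + t) - zeta ξ η t := by
  funext x
  rw [zeta_eq, zeta_eq, zeta_eq, Ff_shift, Ff_shift]
  ring

lemma Ff_mono (μ : Measure ℝ) [IsLocallyFiniteMeasure μ] : Monotone (Ff μ) := by
  intro a b h
  have h1 := Ff_diff μ h
  have h2 : (0:ℝ) ≤ (atomicPart μ (Set.Ico a b)).toReal := ENNReal.toReal_nonneg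
  linarith

lemma zeta_measurable (ξ η : Measure ℝ) [IsLocallyFiniteMeasure ξ] [IsLocallyFiniteMeasure η] :
    Measurable (zeta ξ η) := by
  have : Monotone (zeta ξ η) := by
    intro a b h
    rw [zeta_eq, zeta_eq]
    have h1 := Ff_mono ξ h
    have h2 := Ff_mono η h
    linarith
  exact this.measurable

lemma bind_map_equiv {α β γ : Type*} [MeasurableSpace α] [MeasurableSpace β] [MeasurableSpace γ]
    (m : Measure α) (e : α ≃ᵐ β) (f : β → Measure γ) :
    (m.map e).bind f = m.bind (f ∘ e) := by
  by_cases h : AEMeasurable f (m.map e)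
  · rw [Measure.bind, Measure.bind,
      AEMeasurable.map_map_of_aemeasurable h e.measurable.aemeasurable]
  · rw [Measure.bind, Measure.bind, Measure.map_of_not_aemeasurable h,
      Measure.map_of_not_aemeasurable
        (by rwa [e.measurableEmbedding.aemeasurable_map_iff] at h)]

lemma map_bind_equiv {α β γ : Type*} [MeasurableSpace α] [MeasurableSpace β] [MeasurableSpace γ]
    (m : Measure α) (f : α → Measure β) (e : β ≃ᵐ γ) :
    (m.bind f).map e = m.bind (fun x => (f x).map e) := by
  by_cases h : AEMeasurable f m
  · rw [Measure.bind, Measure.bind, ← Measure.join_map_map e.measurable,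
      AEMeasurable.map_map_of_aemeasurable
        ((Measure.measurable_map e e.measurable).aemeasurable) h]
    rfl
  · have h2 : ¬ AEMeasurable (fun x => (f x).map e) m := by
      intro h2
      apply h
      have hf : f = fun x => ((f x).map ⇑e).map ⇑e.symm := by
        funext x
        rw [Measure.map_map e.symm.measurable e.measurable]
        simp
      rw [hf]
      exact (Measure.measurable_map _ e.symm.measurable).comp_aemeasurable h2
    rw [Measure.bind, Measure.bind, Measure.map_of_not_aemeasurable h,
      Measure.map_of_not_aemeasurable h2, Measure.join_zero, Measure.map_zero,
      Measure.join_zero]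

lemma restrict_Icc_shift (a b c : ℝ) :
    volume.restrict (Set.Icc (a - c) (b - c))
      = (volume.restrict (Set.Icc a b)).map fun x : ℝ => x - c := by
  have h := Measure.restrict_map (f := fun x : ℝ => x - c) (μ := volume)
    (by fun_prop) (measurableSet_Icc (a := a - c) (b := b - c))
  rw [map_sub_right_eq_self volume c, Set.preimage_sub_const_Icc, sub_add_cancel,
    sub_add_cancel] at h
  rw [h]

lemma shiftM_add (c : ℝ) (μ ν : Measure ℝ) :
    shiftM c (μ + ν) = shiftM c μ + shiftM c ν :=
  Measure.map_add _ _ (by fun_prop)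

lemma starM_shift_key (ξ η μ : Measure ℝ)
    [IsLocallyFiniteMeasure ξ] [IsLocallyFiniteMeasure η] [IsLocallyFiniteMeasure μ] (t : ℝ) :
    starM (shiftM t ξ) (shiftM t η) (shiftM t μ)
      = shiftM (zeta ξ η t) (starM ξ η μ) := by
  have hz := zeta_shift ξ η t
  set c := zeta ξ η t with hc
  have hdiff :
      (diffusePart (shiftM t μ)).map (zeta (shiftM t ξ) (shiftM t η))
        = ((diffusePart μ).map (zeta ξ η)).map (fun x => x - c) := by
    rw [hz, diffusePart_shift]
    show ((diffusePart μ).map fun y : ℝ => y - t).map (fun x => zeta ξ η (x + t) - c)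
        = ((diffusePart μ).map (zeta ξ η)).map (fun x => x - c)
    have m1 : Measurable fun x : ℝ => zeta ξ η (x + t) - c :=
      ((zeta_measurable ξ η).comp (by fun_prop)).sub measurable_const
    have m2 : Measurable fun y : ℝ => y - t := by fun_prop
    have m3 : Measurable fun x : ℝ => x - c := by fun_prop
    rw [Measure.map_map m1 m2, Measure.map_map m3 (zeta_measurable ξ η)]
    congr 1
    funext x
    simp [sub_add_cancel]
  have hatom :
      ((atomicPart (shiftM t μ)).bind fun s =>
          ((shiftM t μ) {s})⁻¹ • volume.restrict
            (Set.Icc (zeta (shiftM t ξ) (shiftM t η) s)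
              (zeta (shiftM t ξ) (shiftM t η) s + ((shiftM t μ) {s}).toReal)))
        = ((atomicPart μ).bind fun s =>
            (μ {s})⁻¹ • volume.restrict
              (Set.Icc (zeta ξ η s) (zeta ξ η s + (μ {s}).toReal))).map
            (fun x => x - c) := by
    rw [hz, atomicPart_shift]
    have h1 : shiftM t (atomicPart μ) = (atomicPart μ).map (MeasurableEquiv.subRight t) := by
      rw [e_coe]; rfl
    rw [h1, bind_map_equiv, ← e_coe c, map_bind_equiv]
    congr 1
    funext x
    simp only [Function.comp_apply, e_coe]
    have hμ : (shiftM t μ) {x - t} = μ {x} := by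
      rw [shiftM_singleton, sub_add_cancel]
    have hζ : zeta ξ η (x - t + t) - c = zeta ξ η x - c := by rw [sub_add_cancel]
    rw [hμ, hζ, Measure.map_smul, ← restrict_Icc_shift]
    congr 2
    ring
  rw [starM, starM, hdiff, hatom, shiftM_add]
  rfl

end Aux

/-- Equation (3.20) of the paper: `(θ_t ξ)* = θ_{ζ(t)} ξ*` and `(θ_t η)* = θ_{ζ(t)} η*`. -/
theorem starM_shift (ξ η : Measure ℝ)
    [IsLocallyFiniteMeasure ξ] [IsLocallyFiniteMeasure η] (t : ℝ) :
    starM (shiftM t ξ) (shiftM t η) (shiftM t ξ)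
        = shiftM (zeta ξ η t) (starM ξ η ξ) ∧
      starM (shiftM t ξ) (shiftM t η) (shiftM t η)
        = shiftM (zeta ξ η t) (starM ξ η η) := by
  exact ⟨starM_shift_key ξ η ξ t, starM_shift_key ξ η η t⟩
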